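/- Let u, v ∈ EuclideanSpace ℝ (Fin 3). Define S₁ := (1/2)•( (E(u)−E*(u))∘(E(v)+E*(v)) − (E(v)+E*(v))∘(E(u)−E*(u)) ) and S₂ := (1/2)•( (E(u)+E*(u))∘(E(v)−E*(v)) − (E(v)−E*(v))∘(E(u)+E*(u)) ). Then S₁∘S₁ = S₂∘S₂ = (‖u‖²‖v‖²) • id, and the commutator satisfies S₁∘S₂ − S₂∘S₁ = 4⟨u,v⟩ • ( E(u)∘E(v) + E*(u)∘E*(v) ). In particular S₁ and S₂ commute if and only if either ⟨u,v⟩ = 0 or E(u)∘E(v) + E*(u)∘E*(v) = 0. -/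
import Mathlib


open scoped RealInnerProductSpace

noncomputable section

/-- Left exterior multiplication by a vector on the exterior algebra of `ℝ³`. -/
def wedgeOp (v : EuclideanSpace ℝ (Fin 3)) :
    ExteriorAlgebra ℝ (EuclideanSpace ℝ (Fin 3)) →ₗ[ℝ]
      ExteriorAlgebra ℝ (EuclideanSpace ℝ (Fin 3)) :=
  LinearMap.mulLeft ℝ (ExteriorAlgebra.ι ℝ v)

/-- Left contraction (interior product) along the functional `⟪v, ·⟫`. -/
def contrOp (v : EuclideanSpace ℝ (Fin 3)) :
    ExteriorAlgebra ℝ (EuclideanSpace ℝ (Fin 3)) →ₗ[ℝ]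
      ExteriorAlgebra ℝ (EuclideanSpace ℝ (Fin 3)) :=
  CliffordAlgebra.contractLeft (innerₗ (EuclideanSpace ℝ (Fin 3)) v)

/-- The operator `S₁ = (1/2)[E(u)−E*(u), E(v)+E*(v)]`. -/
def hypGen1 (u v : EuclideanSpace ℝ (Fin 3)) :
    ExteriorAlgebra ℝ (EuclideanSpace ℝ (Fin 3)) →ₗ[ℝ]
      ExteriorAlgebra ℝ (EuclideanSpace ℝ (Fin 3)) :=
  (1 / 2 : ℝ) • ((wedgeOp u - contrOp u) ∘ₗ (wedgeOp v + contrOp v)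
    - (wedgeOp v + contrOp v) ∘ₗ (wedgeOp u - contrOp u))

/-- The operator `S₂ = (1/2)[E(u)+E*(u), E(v)−E*(v)]`. -/
def hypGen2 (u v : EuclideanSpace ℝ (Fin 3)) :
    ExteriorAlgebra ℝ (EuclideanSpace ℝ (Fin 3)) →ₗ[ℝ]
      ExteriorAlgebra ℝ (EuclideanSpace ℝ (Fin 3)) :=
  (1 / 2 : ℝ) • ((wedgeOp u + contrOp u) ∘ₗ (wedgeOp v - contrOp v)
    - (wedgeOp v - contrOp v) ∘ₗ (wedgeOp u + contrOp u))

namespace HypGenAux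

local notation "V" => EuclideanSpace ℝ (Fin 3)
local notation "Λ" => ExteriorAlgebra ℝ (EuclideanSpace ℝ (Fin 3))

/- Base relations, viewed in the endomorphism ring. -/

lemma wedge_wedge (u v : V) :
    (wedgeOp u * wedgeOp v : Module.End ℝ Λ) = -(wedgeOp v * wedgeOp u) := by
  refine LinearMap.ext fun x => ?_
  simp only [wedgeOp, Module.End.mul_apply, LinearMap.mulLeft_apply, LinearMap.neg_apply,
    ← mul_assoc]
  rw [show ExteriorAlgebra.ι ℝ u * ExteriorAlgebra.ι ℝ v
      = -(ExteriorAlgebra.ι ℝ v * ExteriorAlgebra.ι ℝ u) from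
    eq_neg_of_add_eq_zero_left (ExteriorAlgebra.ι_add_mul_swap u v), neg_mul]

lemma contr_contr (u v : V) :
    (contrOp u * contrOp v : Module.End ℝ Λ) = -(contrOp v * contrOp u) := by
  refine LinearMap.ext fun x => ?_
  simpa [contrOp] using CliffordAlgebra.contractLeft_comm (innerₗ V u) (innerₗ V v) x

lemma contr_wedge (u v : V) :
    (contrOp u * wedgeOp v : Module.End ℝ Λ) = ⟪u,v⟫ • 1 - wedgeOp v * contrOp u := by
  refine LinearMap.ext fun x => ?_
  simpa [contrOp, wedgeOp] using CliffordAlgebra.contractLeft_ι_mul (innerₗ V u) v x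

lemma wedge_sq (u : V) : (wedgeOp u * wedgeOp u : Module.End ℝ Λ) = 0 := by
  refine LinearMap.ext fun x => ?_
  simp [wedgeOp, ← mul_assoc, ExteriorAlgebra.ι_sq_zero]

lemma contr_sq (u : V) : (contrOp u * contrOp u : Module.End ℝ Λ) = 0 := by
  refine LinearMap.ext fun x => ?_
  simp [contrOp, CliffordAlgebra.contractLeft_contractLeft]

/- Generic ring computations. -/

lemma sq_of_anticomm {A : Type*} [Ring A] [Algebra ℝ A] (p q : A) (α β : ℝ)
    (hp : p*p = α•1) (hq : q*q = β•1) (hqp : q*p = -(p*q)) :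
    (p*q)*(p*q) = (-(α*β))•1 := by
  calc (p*q)*(p*q) = p*(q*p)*q := by noncomm_ring
    _ = p*(-(p*q))*q := by rw [hqp]
    _ = -(p*p*(q*q)) := by noncomm_ring
    _ = -((α•1)*(β•1)) := by rw [hp, hq]
    _ = (-(α*β))•1 := by simp [smul_smul, mul_comm]

lemma comm_formula {A : Type*} [Ring A] [Algebra ℝ A] (p q p' q' : A) (γ : ℝ)
    (h1 : q*p' = (2*γ)•1 - p'*q) (h2 : q'*p = -((2*γ)•1) - p*q')
    (h3 : p'*p = -(p*p')) (h4 : q'*q = -(q*q')) :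
    (p*q)*(p'*q') - (p'*q')*(p*q) = (2*γ)•(p*q' + p'*q) := by
  have e1 : (p*q)*(p'*q') = (2*γ)•(p*q') + (p'*p)*(q*q') := by
    calc (p*q)*(p'*q') = p*(q*p')*q' := by noncomm_ring
      _ = p*((2*γ)•1 - p'*q)*q' := by rw [h1]
      _ = (2*γ)•(p*q') - (p*p')*(q*q') := by
          simp only [mul_sub, sub_mul, mul_smul_comm, smul_mul_assoc, mul_one]
          noncomm_ring
      _ = (2*γ)•(p*q') + (p'*p)*(q*q') := by rw [h3]; noncomm_ring
  have e2 : (p'*q')*(p*q) = -((2*γ)•(p'*q)) + (p'*p)*(q*q') := by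
    calc (p'*q')*(p*q) = p'*(q'*p)*q := by noncomm_ring
      _ = p'*(-((2*γ)•1) - p*q')*q := by rw [h2]
      _ = -((2*γ)•(p'*q)) - (p'*p)*(q'*q) := by
          simp only [mul_sub, sub_mul, mul_neg, neg_mul, mul_smul_comm, smul_mul_assoc, mul_one]
          noncomm_ring
      _ = -((2*γ)•(p'*q)) + (p'*p)*(q*q') := by rw [h4]; noncomm_ring
  rw [e1, e2, smul_add]
  abel

end HypGenAux

open HypGenAux in
/-- `S₁² = S₂² = ‖u‖²‖v‖² • id`, the commutator
`[S₁,S₂] = 4⟨u,v⟩ • (E(u)∘E(v) + E*(u)∘E*(v))`, and hence `S₁` and `S₂`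
commute iff `⟨u,v⟩ = 0` or `E(u)∘E(v) + E*(u)∘E*(v) = 0`. -/
theorem hypGen_sq_and_commutator (u v : EuclideanSpace ℝ (Fin 3)) :
    hypGen1 u v ∘ₗ hypGen1 u v = (‖u‖ ^ 2 * ‖v‖ ^ 2) • LinearMap.id ∧
      hypGen2 u v ∘ₗ hypGen2 u v = (‖u‖ ^ 2 * ‖v‖ ^ 2) • LinearMap.id ∧
      hypGen1 u v ∘ₗ hypGen2 u v - hypGen2 u v ∘ₗ hypGen1 u v
        = (4 * ⟪u, v⟫) • (wedgeOp u ∘ₗ wedgeOp v + contrOp u ∘ₗ contrOp v) ∧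
      (hypGen1 u v ∘ₗ hypGen2 u v = hypGen2 u v ∘ₗ hypGen1 u v ↔
        ⟪u, v⟫ = 0 ∨ wedgeOp u ∘ₗ wedgeOp v + contrOp u ∘ₗ contrOp v = 0) := by
  set γ : ℝ := ⟪u, v⟫ with hγ
  set α : ℝ := ‖u‖ ^ 2 with hα
  set β : ℝ := ‖v‖ ^ 2 with hβ
  set A := Module.End ℝ (ExteriorAlgebra ℝ (EuclideanSpace ℝ (Fin 3)))
  set a : A := wedgeOp u with ha
  set b : A := contrOp u with hb
  set c : A := wedgeOp v with hc
  set d : A := contrOp v with hd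
  -- base relations
  have Hac : a*c = -(c*a) := wedge_wedge u v
  have Hbd : b*d = -(d*b) := contr_contr u v
  have Hbc : b*c = γ•1 - c*b := contr_wedge u v
  have Hda : d*a = γ•1 - a*d := by
    have := contr_wedge v u
    rw [← real_inner_comm v u] at this
    exact this
  have Hba : b*a = α•1 - a*b := by
    have := contr_wedge u u
    rw [real_inner_self_eq_norm_sq] at this
    exact this
  have Hdc : d*c = β•1 - c*d := by
    have := contr_wedge v v
    rw [real_inner_self_eq_norm_sq] at this
    exact this
  have Ha : a*a = 0 := wedge_sq u
  have Hb : b*b = 0 := contr_sq u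
  have Hc : c*c = 0 := wedge_sq v
  have Hd : d*d = 0 := contr_sq v
  -- reversed forms
  have Hca : c*a = -(a*c) := by rw [Hac, neg_neg]
  have Hdb : d*b = -(b*d) := by rw [Hbd, neg_neg]
  have Hcb : c*b = γ•1 - b*c := by rw [Hbc]; abel
  have Had : a*d = γ•1 - d*a := by rw [Hda]; abel
  -- the four basic combinations
  set p : A := a - b with hpdef
  set q : A := c + d with hqdef
  set p' : A := a + b with hp'def
  set q' : A := c - d with hq'def
  have hp : p*p = (-α)•1 := by
    rw [hpdef]
    simp only [sub_mul, mul_sub, Ha, Hb, Hba]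
    module
  have hq : q*q = β•1 := by
    rw [hqdef]
    simp only [add_mul, mul_add, Hc, Hd, Hdc]
    module
  have hp' : p'*p' = α•1 := by
    rw [hp'def]
    simp only [add_mul, mul_add, Ha, Hb, Hba]
    module
  have hq' : q'*q' = (-β)•1 := by
    rw [hq'def]
    simp only [sub_mul, mul_sub, Hc, Hd, Hdc]
    module
  have hqp : q*p = -(p*q) := by
    rw [hpdef, hqdef]
    simp only [add_mul, mul_add, sub_mul, mul_sub, Hca, Hcb, Hda, Hdb]
    module
  have hq'p' : q'*p' = -(p'*q') := by
    rw [hp'def, hq'def]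
    simp only [add_mul, mul_add, sub_mul, mul_sub, Hca, Hcb, Hda, Hdb]
    module
  have hqp' : q*p' = (2*γ)•1 - p'*q := by
    rw [hp'def, hqdef]
    simp only [add_mul, mul_add, Hca, Hcb, Hda, Hdb]
    module
  have hq'p : q'*p = -((2*γ)•1) - p*q' := by
    rw [hpdef, hq'def]
    simp only [sub_mul, mul_sub, Hca, Hcb, Hda, Hdb]
    module
  have hp'p : p'*p = -(p*p') := by
    rw [hpdef, hp'def]
    simp only [add_mul, mul_add, sub_mul, mul_sub, Ha, Hb, Hba]
    module
  have hq'q : q'*q = -(q*q') := by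
    rw [hqdef, hq'def]
    simp only [add_mul, mul_add, sub_mul, mul_sub, Hc, Hd, Hdc]
    module
  -- simplified forms of the generators
  have hS1 : hypGen1 u v = p*q := by
    show ((1 / 2 : ℝ) • (p ∘ₗ q - q ∘ₗ p) : A) = p*q
    rw [← Module.End.mul_eq_comp, ← Module.End.mul_eq_comp, hqp]
    module
  have hS2 : hypGen2 u v = p'*q' := by
    show ((1 / 2 : ℝ) • (p' ∘ₗ q' - q' ∘ₗ p') : A) = p'*q'
    rw [← Module.End.mul_eq_comp, ← Module.End.mul_eq_comp, hq'p']
    module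
  have hcross : p*q' + p'*q = (2:ℝ)•(a*c + b*d) := by
    rw [hpdef, hqdef, hp'def, hq'def]
    simp only [add_mul, mul_add, sub_mul, mul_sub]
    module
  -- squares
  have sq1 : hypGen1 u v ∘ₗ hypGen1 u v = (α * β) • LinearMap.id := by
    rw [← Module.End.mul_eq_comp, hS1, sq_of_anticomm p q (-α) β hp hq hqp]
    show _ = ((α*β)•1 : A)
    congr 1
    ring
  have sq2 : hypGen2 u v ∘ₗ hypGen2 u v = (α * β) • LinearMap.id := by
    rw [← Module.End.mul_eq_comp, hS2, sq_of_anticomm p' q' α (-β) hp' hq' hq'p']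
    show _ = ((α*β)•1 : A)
    congr 1
    ring
  -- commutator
  have comm : hypGen1 u v ∘ₗ hypGen2 u v - hypGen2 u v ∘ₗ hypGen1 u v
      = (4*γ) • (a*c + b*d) := by
    rw [← Module.End.mul_eq_comp, ← Module.End.mul_eq_comp, hS1, hS2,
      comm_formula p q p' q' γ hqp' hq'p hp'p hq'q, hcross]
    module
  refine ⟨sq1, sq2, ?_, ?_⟩
  · rw [comm]
    rfl
  · rw [show (hypGen1 u v ∘ₗ hypGen2 u v = hypGen2 u v ∘ₗ hypGen1 u v) ↔
        (hypGen1 u v ∘ₗ hypGen2 u v - hypGen2 u v ∘ₗ hypGen1 u v = 0) from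
      (sub_eq_zero (a := hypGen1 u v ∘ₗ hypGen2 u v)).symm, comm]
    rw [smul_eq_zero]
    constructor
    · rintro (h | h)
      · left; linarith
      · right
        rw [← Module.End.mul_eq_comp, ← Module.End.mul_eq_comp]
        exact h
    · rintro (h | h)
      · left; rw [h]; ring
      · right
        rw [← Module.End.mul_eq_comp, ← Module.End.mul_eq_comp] at h
        exact h
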